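/- Let D be a non-crossing diagram of Dynkin type D_n and r_D the replacement map (which replaces a coloured diameter by a coloured pair of radii through the centre c unless the diameter of the other colour on the same pair of endpoints also lies in D, and is the identity on pairs of arcs and when D has no diameters). If both r_D-images of two elements of D are given by endpoint pairs (a,b) and (x,y) (with possibly b or y equal to the centre c), then the corresponding arcs or radii do not cross. -/

import Mathlib

open scoped Classical

namespace DynkinD

/-- Vertices of the regular `2n`-gon, labelled by `ZMod (2*n)`. -/
abbrev Vtx (n : ℕ) := ZMod (2 * n)

/-- The element `n` of `ZMod (2*n)`, i.e. rotation by π. -/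
def dN (n : ℕ) : Vtx n := (n : ZMod (2 * n))

/-- `x` lies strictly between `a` and `b` in anticlockwise order. -/
def btw (n : ℕ) (a x b : Vtx n) : Prop :=
  0 < (x - a).val ∧ (x - a).val < (b - a).val

/-- The arcs `(i,j)` and `(k,l)` cross: the four vertices are pairwise distinct and
appear in anticlockwise cyclic order `i,k,j,l` or `k,i,l,j`. -/
def crosses (n : ℕ) (i j k l : Vtx n) : Prop :=
  (i ≠ j ∧ i ≠ k ∧ i ≠ l ∧ j ≠ k ∧ j ≠ l ∧ k ≠ l) ∧
  ((btw n i k j ∧ btw n j l i) ∨ (btw n k i l ∧ btw n l j k))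

/-- Elements of the combinatorial model: pairs of arcs, coloured diameters,
and coloured pairs of radii (through the centre). -/
inductive RElt (n : ℕ) where
  | pairArc (i j : Vtx n)
  | diam (i : Vtx n) (c : Bool)
  | radii (i : Vtx n) (c : Bool)

def isRadii {n : ℕ} : RElt n → Prop
  | .radii _ _ => True
  | _ => False

/-- Crossing of elements (colour-aware: diameters of the same colour never cross;
a pair of radii crosses another element iff the corresponding diameter does;
two pairs of radii never cross). -/
def crossElt (n : ℕ) : RElt n → RElt n → Prop
  | .pairArc i j, .pairArc k l => crosses n i j k l ∨ crosses n i j (k + dN n) (l + dN n)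
  | .pairArc i j, .diam k _ => crosses n i j k (k + dN n)
  | .diam k _, .pairArc i j => crosses n i j k (k + dN n)
  | .diam i c, .diam j c' => c ≠ c' ∧ crosses n i (i + dN n) j (j + dN n)
  | .radii i _, .pairArc k l => crosses n k l i (i + dN n)
  | .pairArc k l, .radii i _ => crosses n k l i (i + dN n)
  | .radii i c, .diam j c' => c ≠ c' ∧ crosses n i (i + dN n) j (j + dN n)
  | .diam j c', .radii i c => c ≠ c' ∧ crosses n i (i + dN n) j (j + dN n)
  | .radii _ _, .radii _ _ => False

/-- Crossing exactly once. -/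
def crossOnceElt (n : ℕ) : RElt n → RElt n → Prop
  | .pairArc i j, .pairArc k l => Xor' (crosses n i j k l) (crosses n i j (k + dN n) (l + dN n))
  | x, y => crossElt n x y

/-- Plain (colour-blind) geometric crossing of the underlying segments. -/
def geomCross (n : ℕ) : RElt n → RElt n → Prop
  | .pairArc i j, .pairArc k l => crosses n i j k l ∨ crosses n i j (k + dN n) (l + dN n)
  | .pairArc i j, .diam k _ => crosses n i j k (k + dN n)
  | .diam k _, .pairArc i j => crosses n i j k (k + dN n)
  | .diam i _, .diam j _ => crosses n i (i + dN n) j (j + dN n)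
  | .radii i _, .pairArc k l => crosses n k l i (i + dN n)
  | .pairArc k l, .radii i _ => crosses n k l i (i + dN n)
  | .radii i _, .diam j _ => crosses n i (i + dN n) j (j + dN n)
  | .diam j _, .radii i _ => crosses n i (i + dN n) j (j + dN n)
  | .radii _ _, .radii _ _ => False

/-- Identification of representatives of one pair of arcs / coloured diameter / pair of radii. -/
def symEq (n : ℕ) : RElt n → RElt n → Prop
  | .pairArc i j, .pairArc k l =>
      (k = i ∧ l = j) ∨ (k = j ∧ l = i) ∨
      (k = i + dN n ∧ l = j + dN n) ∨ (k = j + dN n ∧ l = i + dN n)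
  | .diam i c, .diam j c' => c = c' ∧ (j = i ∨ j = i + dN n)
  | .radii i c, .radii j c' => c = c' ∧ (j = i ∨ j = i + dN n)
  | _, _ => False

/-- Elements allowed in a diagram of Dynkin type `D_n`: no radii, and pairs of
arcs must be internal non-diameter arcs (no edges, no degenerate arcs). -/
def IsProper {n : ℕ} : RElt n → Prop
  | .pairArc i j => i ≠ j ∧ j ≠ i + dN n ∧ j ≠ i + 1 ∧ i ≠ j + 1
  | .diam _ _ => True
  | .radii _ _ => False

/-- Closure under the symmetries identifying representatives. -/
def SymClosed {n : ℕ} (D : Set (RElt n)) : Prop :=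
  (∀ i j, RElt.pairArc i j ∈ D →
    RElt.pairArc j i ∈ D ∧ RElt.pairArc (i + dN n) (j + dN n) ∈ D) ∧
  (∀ i c, RElt.diam i c ∈ D → RElt.diam (i + dN n) c ∈ D)

/-- A diagram of Dynkin type `D_n`. -/
def IsDiagram {n : ℕ} (D : Set (RElt n)) : Prop :=
  (∀ e ∈ D, IsProper e) ∧ SymClosed D

/-- A non-crossing collection. -/
def NonCrossing {n : ℕ} (D : Set (RElt n)) : Prop :=
  ∀ e ∈ D, ∀ f ∈ D, ¬ crossElt n e f

/-- `nc D` : the elements of `A(P_{2n})` crossing no element of `D`. -/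
def ncD (n : ℕ) (D : Set (RElt n)) : Set (RElt n) :=
  {e | IsProper e ∧ ∀ f ∈ D, ¬ crossElt n e f}

def HasDiam {n : ℕ} (D : Set (RElt n)) : Prop := ∃ i c, RElt.diam i c ∈ D

/-- The replacement map `r_D`: the identity if `D` has no diameters; otherwise it
replaces a coloured diameter by the correspondingly coloured pair of radii, unless
the oppositely coloured diameter with the same endpoints also lies in `D`. -/
noncomputable def rD {n : ℕ} (D : Set (RElt n)) (x : RElt n) : RElt n :=
  if ¬ HasDiam D then x
  else match x with
    | .diam i c =>
        if RElt.diam i (!c) ∈ D ∨ RElt.diam (i + dN n) (!c) ∈ D then .diam i c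
        else .radii i c
    | y => y

/-- Vertices of the `2n`-gon together with the central vertex `c` (`none`). -/
abbrev V (n : ℕ) := Option (Vtx n)

/-- Rotation by π (fixing the centre). -/
def rot (n : ℕ) : V n → V n := Option.map (· + dN n)

/-- Position of a vertex in the plane (the centre at the origin). -/
noncomputable def pos (n : ℕ) : V n → ℂ
  | none => 0
  | some k => Complex.exp (2 * Real.pi * Complex.I * (k.val : ℂ) / (2 * n))

/-- The clockwise angle `∠(x,y,z) ∈ [0,2π)` covered when rotating the segment
`(x,y)` to the segment `(y,z)` clockwise about `y`. -/
noncomputable def ang (n : ℕ) (x y z : V n) : ℝ :=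
  let a := Complex.arg ((pos n x - pos n y) / (pos n z - pos n y))
  if 0 ≤ a then a else a + 2 * Real.pi

/-- The unordered segments underlying an element (both π-rotated copies). -/
def segs (n : ℕ) : RElt n → Set (Sym2 (V n))
  | .pairArc i j => {s(some i, some j), s(some (i + dN n), some (j + dN n))}
  | .diam i _ => {s(some i, some (i + dN n))}
  | .radii i _ => {s(some i, none), s(some (i + dN n), none)}

/-- A `D`-cell of Dynkin type `D_n`: a polygon `⟨d_1,…,d_k⟩`, `k ≥ 3`, with
pairwise distinct vertices in `{0,…,2n-1} ∪ {c}`, whose sides underlie elements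
of `r_D(D)` or edges of the `2n`-gon, satisfying the angle-minimality condition. -/
structure Cell (n : ℕ) (D : Set (RElt n)) where
  k : ℕ
  hk : 3 ≤ k
  d : ZMod k → V n
  inj : Function.Injective d
  sides : ∀ i : ZMod k,
    (∃ e ∈ D, s(d i, d (i + 1)) ∈ segs n (rD D e)) ∨
    (∃ j : Vtx n, s(d i, d (i + 1)) = s(some j, some (j + 1)))
  minAngle : ∀ (i : ZMod k) (v : V n), (∃ e ∈ D, s(d i, v) ∈ segs n (rD D e)) →
    0 < ang n (d (i - 1)) (d i) v →
    0 < ang n (d (i - 1)) (d i) (d (i + 1)) ∧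
      ang n (d (i - 1)) (d i) (d (i + 1)) ≤ ang n (d (i - 1)) (d i) v

/-- `e` is contained in (the pair of `D`-cells of) `C`: `r_D(e)` is a diagonal. -/
def containedIn {n : ℕ} {D : Set (RElt n)} (C : Cell n D) (e : RElt n) : Prop :=
  ∃ i j : ZMod C.k, j ≠ i - 1 ∧ j ≠ i ∧ j ≠ i + 1 ∧ s(C.d i, C.d j) ∈ segs n (rD D e)

/-- Two cells determine the same pair of `D`-cells. -/
def SamePair {n : ℕ} {D : Set (RElt n)} (C C' : Cell n D) : Prop :=
  Set.range C'.d = Set.range C.d ∨ Set.range C'.d = rot n '' Set.range C.d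

/-- A π-rotation-invariant cell. -/
def RotInv {n : ℕ} {D : Set (RElt n)} (C : Cell n D) : Prop :=
  Set.range C.d = rot n '' Set.range C.d

/-- The segment from `u` to `v` is a diameter. -/
def isDiamSeg (n : ℕ) (u v : V n) : Prop := ∃ a : Vtx n, u = some a ∧ v = some (a + dN n)

/-- The colour rules for mutation: whenever the mutated element `e'` is a coloured
diameter, its colour is prescribed according to the diameters of `D`. -/
def colourRule (n : ℕ) (D : Set (RElt n)) (e e' : RElt n) : Prop :=
  ∀ (i : Vtx n) (c' : Bool), e' = RElt.diam i c' →
    ((¬ HasDiam D → ∃ j c, e = RElt.diam j c ∧ c' = !c) ∧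
     ((∃ x y cx cy, RElt.diam x cx ∈ D ∧ RElt.diam y cy ∈ D ∧ y ≠ x ∧ y ≠ x + dN n) →
        ∀ cγ : Bool, (∃ z, RElt.diam z cγ ∈ D) → c' = cγ) ∧
     (∀ (x : Vtx n) (cγ : Bool), RElt.diam x cγ ∈ D →
        (∀ z cz, RElt.diam z cz ∈ D → (z = x ∨ z = x + dN n) ∧ cz = cγ) →
        (c' = !cγ ↔ (i = x ∨ i = x + dN n))))

/-- The mutation `μ_D` as a relation: `D` is fixed pointwise, and an element not in `D`,
contained in a pair of `D`-cells with `r_D`-image the diagonal `(d_i,d_j)`, is sent to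
the element with `r_D`-image `(d_{i+1},d_{j+1})`, colours as prescribed. -/
def MutStep (n : ℕ) (D : Set (RElt n)) (e e' : RElt n) : Prop :=
  (e ∈ D ∧ e' = e) ∨
  (e ∉ D ∧ ¬ isRadii e' ∧ ∃ (C : Cell n D) (i j : ZMod C.k),
    j ≠ i - 1 ∧ j ≠ i ∧ j ≠ i + 1 ∧
    s(C.d i, C.d j) ∈ segs n (rD D e) ∧
    s(C.d (i + 1), C.d (j + 1)) ∈ segs n (rD D e') ∧
    colourRule n D e e')

/-- The mutation `μ_D^-` as a relation (rotating diagonals clockwise). -/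
def MutStepInv (n : ℕ) (D : Set (RElt n)) (e e' : RElt n) : Prop :=
  (e ∈ D ∧ e' = e) ∨
  (e ∉ D ∧ ¬ isRadii e' ∧ ∃ (C : Cell n D) (i j : ZMod C.k),
    j ≠ i - 1 ∧ j ≠ i ∧ j ≠ i + 1 ∧
    s(C.d i, C.d j) ∈ segs n (rD D e) ∧
    s(C.d (i - 1), C.d (j - 1)) ∈ segs n (rD D e') ∧
    colourRule n D e e')

end DynkinD

/-!
A pair of radii crosses exactly what its diameter crosses, so `r_D` can only create a crossing
between two diameters of the same colour. But a diameter survives `r_D` only when `D` contains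
it in both colours, and then its copy of the other colour already crosses in `D`.
-/

namespace DynkinD

variable {n : ℕ}

theorem crosses_comm {i j k l : Vtx n} : crosses n i j k l ↔ crosses n k l i j := by
  simp only [crosses, ne_comm]
  tauto

theorem add_dN_add_dN (i : Vtx n) : i + dN n + dN n = i := by
  have h : (dN n + dN n : Vtx n) = 0 := by
    simpa [dN, two_mul] using ZMod.natCast_self (2 * n)
  rw [add_assoc, h, add_zero]

variable {D : Set (RElt n)}

theorem rD_pairArc (i j : Vtx n) : rD D (.pairArc i j) = .pairArc i j := by
  unfold rD
  split <;> rfl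

theorem rD_diam_eq_or (i : Vtx n) (c : Bool) :
    rD D (.diam i c) = .diam i c ∨ rD D (.diam i c) = .radii i c := by
  unfold rD
  dsimp only
  split_ifs <;> simp

theorem diam_bnot_mem_of_rD_diam_eq_diam (hsym : SymClosed D) {i : Vtx n} {c : Bool}
    (hi : RElt.diam i c ∈ D) (h : rD D (.diam i c) = .diam i c) : RElt.diam i (!c) ∈ D := by
  unfold rD at h
  rw [if_neg (not_not_intro ⟨i, c, hi⟩)] at h
  dsimp only at h
  split_ifs at h with hmem
  rcases hmem with hmem | hmem
  · exact hmem
  · simpa only [add_dN_add_dN] using hsym.2 _ _ hmem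

theorem not_crosses_of_both_colours_mem (hnc : NonCrossing D) {i j : Vtx n}
    {c c' : Bool} (hi : RElt.diam i c ∈ D) (hi' : RElt.diam i (!c) ∈ D)
    (hj : RElt.diam j c' ∈ D) : ¬ crosses n i (i + dN n) j (j + dN n) := by
  intro hcr
  by_cases hcc : c = c'
  · subst hcc
    exact hnc _ hi' _ hj ⟨by simp, hcr⟩
  · exact hnc _ hi _ hj ⟨hcc, hcr⟩

end DynkinD

open DynkinD in
theorem stmt_4_general (n : ℕ) (D : Set (RElt n))
    (hD : IsDiagram D) (hnc : NonCrossing D)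
    (e f : RElt n) (he : e ∈ D) (hf : f ∈ D) :
    ¬ geomCross n (rD D e) (rD D f) := by
  obtain ⟨hprop, hsym⟩ := hD
  cases e with
  | radii => exact (hprop _ he).elim
  | pairArc i j =>
    cases f with
    | radii => exact (hprop _ hf).elim
    | pairArc k l => rw [rD_pairArc, rD_pairArc]; exact hnc _ he _ hf
    | diam k c =>
      rw [rD_pairArc]
      rcases rD_diam_eq_or (D := D) k c with h | h <;> rw [h] <;> exact hnc _ he _ hf
  | diam i c =>
    cases f with
    | radii => exact (hprop _ hf).elim
    | pairArc k l =>
      rw [rD_pairArc]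
      rcases rD_diam_eq_or (D := D) i c with h | h <;> rw [h] <;> exact hnc _ he _ hf
    | diam j c' =>
      have hi' := diam_bnot_mem_of_rD_diam_eq_diam hsym he
      have hj' := diam_bnot_mem_of_rD_diam_eq_diam hsym hf
      rcases rD_diam_eq_or (D := D) i c with hi | hi <;>
        rcases rD_diam_eq_or (D := D) j c' with hj | hj <;> rw [hi, hj]
      · exact not_crosses_of_both_colours_mem hnc he (hi' hi) hf
      · exact crosses_comm.not.mpr (not_crosses_of_both_colours_mem hnc he (hi' hi) hf)
      · exact crosses_comm.not.mpr (not_crosses_of_both_colours_mem hnc hf (hj' hj) he)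
      · exact id

open DynkinD in
/-- The `r_D`-images of two elements of a non-crossing diagram `D` do not cross
(as plain arcs or radii). -/
theorem stmt_4 (n : ℕ) (hn : 4 ≤ n) (D : Set (RElt n))
    (hD : IsDiagram D) (hnc : NonCrossing D)
    (e f : RElt n) (he : e ∈ D) (hf : f ∈ D) :
    ¬ geomCross n (rD D e) (rD D f) :=
  stmt_4_general n D hD hnc e f he hf
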